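/- Let n, d ≥ 1 be integers, α ∈ (0,2), γ ∈ (1,2), K ≥ 0, and let φ : ℝ^{nd} → ℝ be a function, writing points as x = (x_1, x_{2:n}) with x_1 ∈ ℝ^d and x_{2:n} = (x_2,…,x_n) ∈ ℝ^{(n−1)d}. Assume: (i) for every x ∈ ℝ^{nd} the partial gradient D_{x_1}φ(x) ∈ ℝ^d with respect to the first d-dimensional variable exists; (ii) for all x_1, x_1' ∈ ℝ^d and all z ∈ ℝ^{(n−1)d}, |D_{x_1}φ(x_1, z) − D_{x_1}φ(x_1', z)| ≤ K |x_1 − x_1'|^{γ−1}; (iii) for all x_1 ∈ ℝ^d and all z, z' ∈ ℝ^{(n−1)d}, |φ(x_1, z) − φ(x_1, z')| ≤ K Σ_{i=2}^n |(z − z')_i|^{γ/(1+α(i−1))}. Then there exists a constant C, depending only on γ, n and d, such that for all x, x' ∈ ℝ^{nd}: |D_{x_1}φ(x) − D_{x_1}φ(x')| ≤ C K d(x,x')^{γ−1}, where d(x,x') := Σ_{j=1}^n |(x−x')_j|^{1/(1+α(j−1))}. -/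

import Mathlib

/-!
The increment of the gradient in `x₁` is controlled by hypothesis. For the increment in the
degenerate variables work at the scale `δ = d(x, x')`: step a distance `δ` from `x₁'` in the
direction of `g x₁' z - g x₁' z'` and compare the first-order Taylor expansions of `φ(·, z)` and
`φ(·, z')`. Both remainders are at most `K δ^γ` by the Hölder continuity of the gradient, and the
two functions differ by at most `K δ^γ` everywhere, since every block term
`|(z - z')ᵢ|^{γ/(1+αi)}` is the `γ`-th power of a summand of `δ`. Dividing by `δ` bounds the
increment by `4 K δ^{γ-1}`.
-/

/-- The `i`-th d-dimensional block of a point of `ℝ^{md}`, as a vector of the Euclidean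
space `ℝ^d`. -/
noncomputable def blkOf (m d : ℕ) (z : Fin m × Fin d → ℝ) (i : Fin m) :
    EuclideanSpace ℝ (Fin d) :=
  (EuclideanSpace.equiv (Fin d) ℝ).symm (fun a => z (i, a))

open RealInnerProductSpace InnerProductSpace

theorem Finset.sum_rpow_le_rpow_sub_one_mul {ι : Type*} (s : Finset ι) {a : ι → ℝ} {δ γ : ℝ}
    (ha : ∀ i ∈ s, 0 ≤ a i) (hsum : ∑ i ∈ s, a i ≤ δ) (hγ : 1 ≤ γ) :
    ∑ i ∈ s, a i ^ γ ≤ δ ^ (γ - 1) * δ := by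
  have hδ : 0 ≤ δ := (Finset.sum_nonneg ha).trans hsum
  calc ∑ i ∈ s, a i ^ γ ≤ ∑ i ∈ s, δ ^ (γ - 1) * a i := Finset.sum_le_sum fun i hi => by
        have hai : a i ≤ δ := (Finset.single_le_sum ha hi).trans hsum
        calc a i ^ γ = a i ^ (γ - 1) * a i := by
              rw [← Real.rpow_add_one' (ha i hi) (by linarith), sub_add_cancel]
          _ ≤ δ ^ (γ - 1) * a i := by gcongr; exacts [ha i hi, ha i hi]
    _ = δ ^ (γ - 1) * ∑ i ∈ s, a i := by rw [Finset.mul_sum]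
    _ ≤ δ ^ (γ - 1) * δ := by gcongr

section HolderGradient

variable {E : Type*} [NormedAddCommGroup E] [InnerProductSpace ℝ E] [CompleteSpace E]
  {f f' : E → ℝ} {g g' : E → E} {K β : ℝ}

theorem abs_sub_sub_inner_le_of_hasGradientAt_of_holder
    (hf : ∀ x, HasGradientAt f (g x) x) (hg : ∀ x y, ‖g x - g y‖ ≤ K * ‖x - y‖ ^ β)
    (hK : 0 ≤ K) (hβ : 0 ≤ β) (x h : E) :
    |f (x + h) - f x - ⟪g x, h⟫| ≤ K * ‖h‖ ^ β * ‖h‖ := by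
  have hbound : ∀ y ∈ Metric.closedBall x ‖h‖, ‖toDual ℝ E (g y) - toDual ℝ E (g x)‖ ≤
      K * ‖h‖ ^ β := fun y hy => by
    rw [← map_sub, LinearIsometryEquiv.norm_map]
    exact (hg y x).trans (by gcongr; exact mem_closedBall_iff_norm.mp hy)
  have := (convex_closedBall x ‖h‖).norm_image_sub_le_of_norm_hasFDerivWithin_le'
    (fun y _ => (hf y).hasFDerivAt.hasFDerivWithinAt) hbound
    (Metric.mem_closedBall_self (norm_nonneg h)) (y := x + h) (by simp)
  simpa [toDual_apply_apply] using this

theorem norm_sub_le_of_hasGradientAt_of_abs_sub_le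
    (hf : ∀ x, HasGradientAt f (g x) x) (hf' : ∀ x, HasGradientAt f' (g' x) x)
    (hg : ∀ x y, ‖g x - g y‖ ≤ K * ‖x - y‖ ^ β) (hg' : ∀ x y, ‖g' x - g' y‖ ≤ K * ‖x - y‖ ^ β)
    (hK : 0 ≤ K) (hβ : 0 ≤ β) {δ : ℝ} (hδ : 0 ≤ δ) (hff' : ∀ u, |f u - f' u| ≤ K * δ ^ β * δ)
    (x : E) : ‖g x - g' x‖ ≤ 4 * K * δ ^ β := by
  rcases hδ.eq_or_lt with rfl | hδpos
  · have : f = f' := funext fun u => sub_eq_zero.mp (abs_nonpos_iff.mp (by simpa using hff' u))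
    subst this
    rw [(hf x).unique (hf' x), sub_self, norm_zero]
    positivity
  set w := g x - g' x
  set h := (δ / ‖w‖) • w
  have hh : ‖h‖ ≤ δ := by
    rcases eq_or_ne w 0 with hw | hw
    · simp [h, hw, hδ]
    · rw [norm_smul, Real.norm_of_nonneg (by positivity),
        div_mul_cancel₀ _ (norm_ne_zero_iff.mpr hw)]
  have hwh : ⟪w, h⟫ = δ * ‖w‖ := by
    rw [real_inner_smul_right, real_inner_self_eq_norm_sq]
    rcases eq_or_ne ‖w‖ 0 with hw | hw
    · simp [hw]
    · field_simp
  rw [inner_sub_left] at hwh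
  have hrem : ∀ {F : E → ℝ} {G : E → E}, (∀ x, HasGradientAt F (G x) x) →
      (∀ x y, ‖G x - G y‖ ≤ K * ‖x - y‖ ^ β) →
      |F (x + h) - F x - ⟪G x, h⟫| ≤ K * δ ^ β * δ := fun hF hG =>
    (abs_sub_sub_inner_le_of_hasGradientAt_of_holder hF hG hK hβ x h).trans (by gcongr)
  have h₁ := abs_le.mp (hrem hf hg)
  have h₂ := abs_le.mp (hrem hf' hg')
  have h₃ := abs_le.mp (hff' (x + h))
  have h₄ := abs_le.mp (hff' x)
  refine le_of_mul_le_mul_left ?_ hδpos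
  linarith

end HolderGradient

theorem reverse_taylor_expansion_general (n d : ℕ)
    (γ : ℝ) (hγ : γ ∈ Set.Ioo (1 : ℝ) 2) :
    ∃ C : ℝ, 0 < C ∧
      ∀ α K : ℝ, α ∈ Set.Ioo (0 : ℝ) 2 → 0 ≤ K →
      ∀ (φ : EuclideanSpace ℝ (Fin d) → (Fin (n - 1) × Fin d → ℝ) → ℝ)
        (g : EuclideanSpace ℝ (Fin d) → (Fin (n - 1) × Fin d → ℝ) →
          EuclideanSpace ℝ (Fin d)),
        (∀ (x₁ : EuclideanSpace ℝ (Fin d)) (z : Fin (n - 1) × Fin d → ℝ),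
          HasGradientAt (fun u => φ u z) (g x₁ z) x₁) →
        (∀ (x₁ x₁' : EuclideanSpace ℝ (Fin d)) (z : Fin (n - 1) × Fin d → ℝ),
          ‖g x₁ z - g x₁' z‖ ≤ K * ‖x₁ - x₁'‖ ^ (γ - 1)) →
        (∀ (x₁ : EuclideanSpace ℝ (Fin d)) (z z' : Fin (n - 1) × Fin d → ℝ),
          |φ x₁ z - φ x₁ z'| ≤
            K * ∑ i : Fin (n - 1),
              ‖blkOf (n - 1) d (z - z') i‖ ^ (γ / (1 + α * ((i : ℕ) + 1)))) →
      ∀ (x₁ x₁' : EuclideanSpace ℝ (Fin d)) (z z' : Fin (n - 1) × Fin d → ℝ),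
        ‖g x₁ z - g x₁' z'‖ ≤
          C * K * (‖x₁ - x₁'‖ + ∑ i : Fin (n - 1),
            ‖blkOf (n - 1) d (z - z') i‖ ^ (1 / (1 + α * ((i : ℕ) + 1)))) ^ (γ - 1) := by
  refine ⟨5, by norm_num, fun α K _ hK φ g hgrad hgx hφz x₁ x₁' z z' => ?_⟩
  have hβ : 0 ≤ γ - 1 := sub_nonneg.mpr hγ.1.le
  set δ := ‖x₁ - x₁'‖ + ∑ i : Fin (n - 1),
    ‖blkOf (n - 1) d (z - z') i‖ ^ (1 / (1 + α * ((i : ℕ) + 1)))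
  have hblocks : ∑ i : Fin (n - 1), ‖blkOf (n - 1) d (z - z') i‖ ^ (γ / (1 + α * ((i : ℕ) + 1)))
      ≤ δ ^ (γ - 1) * δ := by
    simp_rw [← one_div_mul_eq_div _ γ, Real.rpow_mul (norm_nonneg _)]
    exact Finset.univ.sum_rpow_le_rpow_sub_one_mul (fun i _ => by positivity)
      (le_add_of_nonneg_left (norm_nonneg _)) hγ.1.le
  have hx : ‖x₁ - x₁'‖ ≤ δ := le_add_of_nonneg_right (by positivity)
  calc ‖g x₁ z - g x₁' z'‖ ≤ ‖g x₁ z - g x₁' z‖ + ‖g x₁' z - g x₁' z'‖ :=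
        norm_sub_le_norm_sub_add_norm_sub _ _ _
    _ ≤ K * δ ^ (γ - 1) + 4 * K * δ ^ (γ - 1) := by
        gcongr
        · exact (hgx _ _ _).trans (by gcongr)
        · exact norm_sub_le_of_hasGradientAt_of_abs_sub_le (hgrad · z) (hgrad · z') (hgx · · z)
            (hgx · · z') hK hβ (hx.trans' (norm_nonneg _))
            (fun u => (hφz u z z').trans (by rw [mul_assoc]; gcongr)) x₁'
    _ = 5 * K * δ ^ (γ - 1) := by ring

/-- Reverse Taylor Expansion: if `φ(x₁, x_{2:n})` admits a gradient `g` in the first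
(non-degenerate) variable `x₁ ∈ ℝ^d` which is `(γ-1)`-Hölder in `x₁` uniformly in the
other variables, and `φ` is componentwise anisotropically Hölder in the degenerate variables
`x_{2:n} ∈ ℝ^{(n-1)d}` with exponents `γ/(1+α(i-1))`, then `g` is `(γ-1)`-Hölder for the full
anisotropic distance: `|g(x) - g(x')| ≤ C K d(x,x')^{γ-1}`, with `C = C(γ,n,d)`. -/
theorem reverse_taylor_expansion (n d : ℕ) (hn : 1 ≤ n) (hd : 1 ≤ d)
    (γ : ℝ) (hγ : γ ∈ Set.Ioo (1 : ℝ) 2) :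
    ∃ C : ℝ, 0 < C ∧
      ∀ α K : ℝ, α ∈ Set.Ioo (0 : ℝ) 2 → 0 ≤ K →
      ∀ (φ : EuclideanSpace ℝ (Fin d) → (Fin (n - 1) × Fin d → ℝ) → ℝ)
        (g : EuclideanSpace ℝ (Fin d) → (Fin (n - 1) × Fin d → ℝ) →
          EuclideanSpace ℝ (Fin d)),
        (∀ (x₁ : EuclideanSpace ℝ (Fin d)) (z : Fin (n - 1) × Fin d → ℝ),
          HasGradientAt (fun u => φ u z) (g x₁ z) x₁) →
        (∀ (x₁ x₁' : EuclideanSpace ℝ (Fin d)) (z : Fin (n - 1) × Fin d → ℝ),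
          ‖g x₁ z - g x₁' z‖ ≤ K * ‖x₁ - x₁'‖ ^ (γ - 1)) →
        (∀ (x₁ : EuclideanSpace ℝ (Fin d)) (z z' : Fin (n - 1) × Fin d → ℝ),
          |φ x₁ z - φ x₁ z'| ≤
            K * ∑ i : Fin (n - 1),
              ‖blkOf (n - 1) d (z - z') i‖ ^ (γ / (1 + α * ((i : ℕ) + 1)))) →
      ∀ (x₁ x₁' : EuclideanSpace ℝ (Fin d)) (z z' : Fin (n - 1) × Fin d → ℝ),
        ‖g x₁ z - g x₁' z'‖ ≤
          C * K * (‖x₁ - x₁'‖ + ∑ i : Fin (n - 1),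
            ‖blkOf (n - 1) d (z - z') i‖ ^ (1 / (1 + α * ((i : ℕ) + 1)))) ^ (γ - 1) :=
  reverse_taylor_expansion_general n d γ hγ
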